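/- Let m ≥ 2 be an integer, and let Y_1, …, Y_m be independent random variables with Y_i ~ Geom(p_i) where p_i ∈ (0,1] for each i. Then P( Y_1 + ⋯ + Y_m > m² / (4 (p_1 + ⋯ + p_m)) ) ≥ 1/9. -/

import Mathlib

/-!
Write `X = Y₁ + ⋯ + Yₘ`. Since `Y² ≤ Y (Y + 1)` and a geometric variable has factorial moments
`E[C(Y + k - 1, k)] = p⁻ᵏ`, we get `E X = ∑ 1 / pᵢ` and, by pairwise independence,
`E X² ≤ 2 (E X)²`. By Cauchy–Schwarz, `m² ≤ (∑ pᵢ) (∑ 1 / pᵢ)`, so the threshold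
`m² / (4 ∑ pᵢ)` is at most `E X / 4`, and the Paley–Zygmund inequality
`(E X - t)² ≤ E X² · P(X > t)` yields `P(X > t) ≥ (3/4)² / 2 = 9/32 ≥ 1/9`.
All moments are lower Lebesgue integrals in `ℝ≥0∞`, so no integrability side conditions arise.
-/

open MeasureTheory ProbabilityTheory

/-- The law of a geometric random variable with success probability `p`,
supported on the positive integers: `P(Y = k) = (1 - p)^(k-1) * p` for `k ≥ 1`. -/
noncomputable def geomMeasure (p : ℝ) : Measure ℕ :=
  Measure.count.withDensity
    (fun k => if 1 ≤ k then ENNReal.ofReal ((1 - p) ^ (k - 1) * p) else 0)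

open Finset
open scoped ENNReal

section Geometric

variable {p : ℝ}

lemma lintegral_geomMeasure (g : ℕ → ℝ≥0∞) :
    ∫⁻ k, g k ∂geomMeasure p = ∑' n, ENNReal.ofReal ((1 - p) ^ n * p) * g (n + 1) := by
  rw [geomMeasure, lintegral_withDensity_eq_lintegral_mul _ .of_discrete .of_discrete,
    lintegral_count, tsum_eq_zero_add' ENNReal.summable]
  simp

lemma lintegral_geomMeasure_choose (hp : p ∈ Set.Ioc 0 1) (k : ℕ) :
    ∫⁻ n, ((n + k - 1).choose k : ℝ≥0∞) ∂geomMeasure p = ENNReal.ofReal (1 / p ^ k) := by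
  obtain ⟨hp0, hp1⟩ := hp
  have hq : 0 ≤ 1 - p := by linarith
  have hr : ‖1 - p‖ < 1 := by
    rw [Real.norm_eq_abs, abs_of_nonneg hq]
    linarith
  have hsum := (hasSum_choose_mul_geometric_of_norm_lt_one k hr).mul_left p
  rw [sub_sub_cancel] at hsum
  have hterm : ∀ n : ℕ, ENNReal.ofReal ((1 - p) ^ n * p) * ((n + 1 + k - 1).choose k : ℝ≥0∞)
      = ENNReal.ofReal (p * ((n + k).choose k * (1 - p) ^ n)) := by
    intro n
    rw [show n + 1 + k - 1 = n + k by omega, ← ENNReal.ofReal_natCast,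
      ← ENNReal.ofReal_mul (by positivity)]
    ring_nf
  rw [lintegral_geomMeasure, tsum_congr hterm,
    ← ENNReal.ofReal_tsum_of_nonneg (fun n => by positivity) hsum.summable, hsum.tsum_eq]
  congr 1
  field_simp
  ring

lemma lintegral_geomMeasure_natCast (hp : p ∈ Set.Ioc 0 1) :
    ∫⁻ n, (n : ℝ≥0∞) ∂geomMeasure p = ENNReal.ofReal (1 / p) := by
  simpa using lintegral_geomMeasure_choose hp 1

lemma lintegral_geomMeasure_natCast_sq_le (hp : p ∈ Set.Ioc 0 1) :
    ∫⁻ n, (n : ℝ≥0∞) ^ 2 ∂geomMeasure p ≤ 2 * ENNReal.ofReal (1 / p) ^ 2 := by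
  have hsq : ∀ n : ℕ, (n : ℝ≥0∞) ^ 2 ≤ 2 * ((n + 2 - 1).choose 2 : ℝ≥0∞) := by
    intro n
    have h := Nat.add_one_mul_choose_eq n 1
    rw [Nat.choose_one_right] at h
    exact_mod_cast show n ^ 2 ≤ 2 * (n + 2 - 1).choose 2 by
      rw [show n + 2 - 1 = n + 1 by omega]; nlinarith
  calc ∫⁻ n, (n : ℝ≥0∞) ^ 2 ∂geomMeasure p
      ≤ ∫⁻ n, 2 * ((n + 2 - 1).choose 2 : ℝ≥0∞) ∂geomMeasure p := lintegral_mono hsq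
    _ = 2 * ENNReal.ofReal (1 / p) ^ 2 := by
      rw [lintegral_const_mul _ .of_discrete, lintegral_geomMeasure_choose hp,
        ← ENNReal.ofReal_pow (by have := hp.1; positivity), one_div_pow]

end Geometric

section SecondMoment

variable {Ω : Type*} [MeasurableSpace Ω] {μ : Measure Ω}

theorem sq_lintegral_sub_le_lintegral_sq_mul_measure [IsProbabilityMeasure μ] {X : Ω → ℝ≥0∞}
    (hX : Measurable X) (t : ℝ≥0∞) :
    (∫⁻ ω, X ω ∂μ - t) ^ 2 ≤ (∫⁻ ω, X ω ^ 2 ∂μ) * μ {ω | t < X ω} := by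
  set E := {ω | t < X ω}
  have hE : MeasurableSet E := measurableSet_lt measurable_const hX
  have hsplit : ∫⁻ ω, X ω ∂μ ≤ t + ∫⁻ ω, X ω * E.indicator 1 ω ∂μ := by
    calc ∫⁻ ω, X ω ∂μ ≤ ∫⁻ ω, t + X ω * E.indicator 1 ω ∂μ := by
          refine lintegral_mono fun ω => ?_
          by_cases hω : ω ∈ E
          · simp [hω]
          · rw [Set.indicator_of_notMem hω, mul_zero, add_zero]
            exact not_lt.1 hω
      _ = t + ∫⁻ ω, X ω * E.indicator 1 ω ∂μ := by
          rw [lintegral_add_left measurable_const, lintegral_const, measure_univ, mul_one]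
  have hCS := ENNReal.lintegral_mul_le_Lp_mul_Lq μ Real.HolderConjugate.two_two hX.aemeasurable
    (measurable_one.indicator hE).aemeasurable
  have hind : ∀ ω, E.indicator (1 : Ω → ℝ≥0∞) ω ^ (2 : ℝ) = E.indicator 1 ω := by
    intro ω
    by_cases hω : ω ∈ E <;> simp [hω]
  simp only [hind, ENNReal.rpow_two, lintegral_indicator_one hE] at hCS
  calc (∫⁻ ω, X ω ∂μ - t) ^ 2 ≤ (∫⁻ ω, X ω * E.indicator 1 ω ∂μ) ^ 2 := by
        gcongr
        exact tsub_le_iff_left.2 hsplit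
    _ ≤ (((∫⁻ ω, X ω ^ 2 ∂μ) ^ (1 / 2 : ℝ) * μ E ^ (1 / 2 : ℝ))) ^ 2 := by
        gcongr
        exact hCS
    _ = (∫⁻ ω, X ω ^ 2 ∂μ) * μ E := by
        rw [mul_pow, ← ENNReal.rpow_natCast, ← ENNReal.rpow_natCast (μ E ^ _),
          ← ENNReal.rpow_mul, ← ENNReal.rpow_mul]
        norm_num

theorem lintegral_sq_sum_le_of_pairwise_indepFun {ι : Type*} [Fintype ι] {f : ι → Ω → ℝ≥0∞}
    (hf : ∀ i, Measurable (f i)) (hindep : Pairwise fun i j => IndepFun (f i) (f j) μ)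
    {c : ℝ≥0∞} (hc : 1 ≤ c) (hsq : ∀ i, ∫⁻ ω, f i ω ^ 2 ∂μ ≤ c * (∫⁻ ω, f i ω ∂μ) ^ 2) :
    ∫⁻ ω, (∑ i, f i ω) ^ 2 ∂μ ≤ c * (∑ i, ∫⁻ ω, f i ω ∂μ) ^ 2 := by
  have hterm : ∀ i j, ∫⁻ ω, f i ω * f j ω ∂μ ≤ c * ((∫⁻ ω, f i ω ∂μ) * ∫⁻ ω, f j ω ∂μ) := by
    intro i j
    rcases eq_or_ne i j with rfl | hij
    · simpa only [sq] using hsq i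
    · rw [← lintegral_mul_eq_lintegral_mul_lintegral_of_indepFun (hf i) (hf j) (hindep hij)]
      exact le_mul_of_one_le_left' hc
  calc ∫⁻ ω, (∑ i, f i ω) ^ 2 ∂μ = ∑ i, ∑ j, ∫⁻ ω, f i ω * f j ω ∂μ := by
        simp only [sq, sum_mul_sum]
        rw [lintegral_finsetSum (f := fun i ω => ∑ j, f i ω * f j ω) _
          fun i _ => Finset.measurable_sum _ fun j _ => (hf i).mul (hf j)]
        exact sum_congr rfl fun i _ =>
          lintegral_finsetSum (f := fun j ω => f i ω * f j ω) _ fun j _ => (hf i).mul (hf j)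
    _ ≤ ∑ i, ∑ j, c * ((∫⁻ ω, f i ω ∂μ) * ∫⁻ ω, f j ω ∂μ) := by
        gcongr with i _ j _
        exact hterm i j
    _ = c * (∑ i, ∫⁻ ω, f i ω ∂μ) ^ 2 := by
        rw [sq, sum_mul_sum, mul_sum]
        exact sum_congr rfl fun i _ => by rw [mul_sum]

theorem nine_div_thirtyTwo_le_measure_lt [IsProbabilityMeasure μ] {X : Ω → ℝ≥0∞}
    (hX : Measurable X) {a t : ℝ≥0∞} (hmean : ∫⁻ ω, X ω ∂μ = a) (ha₀ : a ≠ 0) (ha : a ≠ ⊤)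
    (hsq : ∫⁻ ω, X ω ^ 2 ∂μ ≤ 2 * a ^ 2) (ht : 4 * t ≤ a) :
    9 / 32 ≤ μ {ω | t < X ω} := by
  have hPZ := sq_lintegral_sub_le_lintegral_sq_mul_measure (μ := μ) hX t
  rw [hmean] at hPZ
  replace hPZ := hPZ.trans (mul_le_mul_left hsq _)
  have htop : t ≠ ⊤ := ne_top_of_le_ne_top ha (le_trans (le_mul_of_one_le_left' (by norm_num)) ht)
  have hq : μ {ω | t < X ω} ≠ ⊤ := measure_ne_top _ _
  generalize μ {ω | t < X ω} = q at hPZ hq ⊢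
  lift a to NNReal using ha
  lift t to NNReal using htop
  lift q to NNReal using hq
  have hta : t ≤ a := by
    have : (t : ℝ≥0∞) ≤ a := le_trans (le_mul_of_one_le_left' (by norm_num)) ht
    exact_mod_cast this
  rw [← ENNReal.coe_sub] at hPZ
  have hPZ' : ((a - t : NNReal) : ℝ) ^ 2 ≤ 2 * (a : ℝ) ^ 2 * q := by exact_mod_cast hPZ
  have ht' : 4 * (t : ℝ) ≤ a := by exact_mod_cast ht
  have ha' : (0 : ℝ) < a := NNReal.coe_pos.2 (pos_iff_ne_zero.2 (by exact_mod_cast ha₀))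
  rw [NNReal.coe_sub hta] at hPZ'
  have hgap : (3 / 4 * a : ℝ) ^ 2 ≤ (a - t) ^ 2 := by
    gcongr
    linarith
  have hq' : (9 / 32 : ℝ) ≤ q := by
    have ha2 : (0 : ℝ) < a ^ 2 := by positivity
    nlinarith
  have hcast : ((9 / 32 : NNReal) : ℝ≥0∞) = 9 / 32 := by
    rw [ENNReal.coe_div (by norm_num)]
    norm_num
  rw [← hcast]
  exact_mod_cast hq'

end SecondMoment

section GeometricSum

variable {Ω : Type*} [MeasurableSpace Ω] {μ : Measure Ω} {ι : Type*} [Fintype ι]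
  {p : ι → ℝ} {Y : ι → Ω → ℕ}

theorem lintegral_sum_of_map_eq_geomMeasure (hp : ∀ i, p i ∈ Set.Ioc 0 1)
    (hY : ∀ i, Measurable (Y i)) (hdist : ∀ i, μ.map (Y i) = geomMeasure (p i)) :
    ∫⁻ ω, ∑ i, (Y i ω : ℝ≥0∞) ∂μ = ENNReal.ofReal (∑ i, 1 / p i) := by
  have hY' (i : ι) : Measurable fun ω => (Y i ω : ℝ≥0∞) := measurable_from_nat.comp (hY i)
  rw [lintegral_finsetSum _ fun i _ => hY' i,
    ENNReal.ofReal_sum_of_nonneg fun i _ => (one_div_pos.2 (hp i).1).le]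
  refine sum_congr rfl fun i _ => ?_
  rw [← lintegral_map measurable_from_nat (hY i), hdist, lintegral_geomMeasure_natCast (hp i)]

theorem lintegral_sq_sum_le_of_map_eq_geomMeasure (hp : ∀ i, p i ∈ Set.Ioc 0 1)
    (hY : ∀ i, Measurable (Y i)) (hindep : Pairwise fun i j => IndepFun (Y i) (Y j) μ)
    (hdist : ∀ i, μ.map (Y i) = geomMeasure (p i)) :
    ∫⁻ ω, (∑ i, (Y i ω : ℝ≥0∞)) ^ 2 ∂μ ≤ 2 * ENNReal.ofReal (∑ i, 1 / p i) ^ 2 := by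
  have hY' (i : ι) : Measurable fun ω => (Y i ω : ℝ≥0∞) := measurable_from_nat.comp (hY i)
  have hsq (i : ι) : ∫⁻ ω, (Y i ω : ℝ≥0∞) ^ 2 ∂μ ≤ 2 * (∫⁻ ω, (Y i ω : ℝ≥0∞) ∂μ) ^ 2 := by
    rw [← lintegral_map measurable_from_nat (hY i),
      ← lintegral_map (f := fun n : ℕ => (n : ℝ≥0∞) ^ 2) measurable_from_nat (hY i), hdist,
      lintegral_geomMeasure_natCast (hp i)]
    exact lintegral_geomMeasure_natCast_sq_le (hp i)
  have h := lintegral_sq_sum_le_of_pairwise_indepFun hY'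
    (fun i j hij => (hindep hij).comp measurable_from_nat measurable_from_nat) one_le_two hsq
  rwa [← lintegral_finsetSum _ fun i _ => hY' i,
    lintegral_sum_of_map_eq_geomMeasure hp hY hdist] at h

end GeometricSum

theorem geom_sum_concentration
    {Ω : Type*} [MeasurableSpace Ω] (μ : Measure Ω) [IsProbabilityMeasure μ]
    (m : ℕ) (hm : 2 ≤ m) (p : Fin m → ℝ) (hp : ∀ i, p i ∈ Set.Ioc (0 : ℝ) 1)
    (Y : Fin m → Ω → ℕ) (hYmeas : ∀ i, Measurable (Y i))
    (hindep : iIndepFun Y μ)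
    (hdist : ∀ i, Measure.map (Y i) μ = geomMeasure (p i)) :
    (1 : ENNReal) / 9 ≤
      μ {ω | (m : ℝ) ^ 2 / (4 * ∑ i, p i) < ((∑ i, Y i ω : ℕ) : ℝ)} := by
  set T := (m : ℝ) ^ 2 / (4 * ∑ i, p i)
  have hT : 0 ≤ T := div_nonneg (by positivity) (mul_nonneg zero_le_four
    (sum_nonneg fun i _ => (hp i).1.le))
  have hTle : 4 * T ≤ ∑ i, 1 / p i := by
    have := sq_sum_div_le_sum_sq_div univ (fun _ => (1 : ℝ)) fun i _ => (hp i).1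
    simp only [sum_const, card_univ, Fintype.card_fin, nsmul_eq_mul, mul_one, one_pow] at this
    rwa [mul_div_assoc', mul_div_mul_left _ _ four_ne_zero]
  have hH : 0 < ∑ i, 1 / p i :=
    sum_pos (fun i _ => one_div_pos.2 (hp i).1) (univ_nonempty_iff.2 ⟨⟨0, by omega⟩⟩)
  have hevent : {ω | T < ((∑ i, Y i ω : ℕ) : ℝ)}
      = {ω | ENNReal.ofReal T < ∑ i, (Y i ω : ℝ≥0∞)} := by
    ext ω
    simp only [Set.mem_ofPred_eq]
    rw [← Nat.cast_sum, ← ENNReal.ofReal_natCast, ENNReal.ofReal_lt_ofReal_iff_of_nonneg hT]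
  have hconst : (1 : ℝ≥0∞) / 9 ≤ 9 / 32 := by
    rw [ENNReal.div_le_iff (by norm_num) (by norm_num), ← ENNReal.mul_div_right_comm,
      ENNReal.le_div_iff_mul_le (by norm_num) (by norm_num)]
    norm_num
  rw [hevent]
  refine hconst.trans (nine_div_thirtyTwo_le_measure_lt
    (Finset.measurable_sum _ fun i _ => measurable_from_nat.comp (hYmeas i))
    (lintegral_sum_of_map_eq_geomMeasure hp hYmeas hdist) (ENNReal.ofReal_pos.2 hH).ne'
    ENNReal.ofReal_ne_top
    (lintegral_sq_sum_le_of_map_eq_geomMeasure hp hYmeas (fun i j => hindep.indepFun) hdist) ?_)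
  rw [← ENNReal.ofReal_ofNat 4, ← ENNReal.ofReal_mul zero_le_four]
  exact ENNReal.ofReal_le_ofReal hTle
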